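/- Let p and p' each be either 0 or a prime number, and let S̄, S̄' ∈ [Π_n(G)] satisfy [N_G(S̄):S_0] ≢ 0 (mod p) and [N_G(S̄'):S'_0] ≢ 0 (mod p'). Then the prime ideals of B_n(G) satisfy I_{S̄',p'} ⊆ I_{S̄,p}, where I_{S̄,p} = {x ∈ B_n(G) : x_{S̄} ∈ pℤ}, if and only if either (i) p' = p and S̄' = S̄, or (ii) p' = 0, p is a prime, and m(S̄',T̄) ≡ m(S̄,T̄) (mod p) for every n-slice T̄ of G. -/

import Mathlib

variable {G : Type*}

/-- The conjugate slice `ᵍS̄ = (gS₀g⁻¹, …, gSₙg⁻¹)`. -/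
def sliceConj [Group G] {n : ℕ} (g : G) (S : Fin (n + 1) → Subgroup G) :
    Fin (n + 1) → Subgroup G :=
  fun i => (S i).map (MulAut.conj g).toMonoidHom

/-- The mark `m(K̄,S̄) = |{gS₀ ∈ G/S₀ : g⁻¹Kᵢg ≤ Sᵢ for all i}|`. -/
noncomputable def mark [Group G] {n : ℕ} (K S : Fin (n + 1) → Subgroup G) : ℕ :=
  Nat.card {x : G ⧸ S 0 //
    ∃ g : G, QuotientGroup.mk g = x ∧ ∀ i, ∀ k ∈ K i, g⁻¹ * k * g ∈ S i}

/-- The normalizer `N_G(S̄) = ⋂ᵢ N_G(Sᵢ)` of a slice. -/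
def sliceNormalizer [Group G] {n : ℕ} (S : Fin (n + 1) → Subgroup G) : Subgroup G :=
  ⨅ i, Subgroup.normalizer (S i : Set G)

/-- The index `[N_G(S̄) : S₀]`. -/
noncomputable def sliceIndex [Group G] {n : ℕ} (S : Fin (n + 1) → Subgroup G) : ℕ :=
  (S 0).relIndex (sliceNormalizer S)

/-
Since the subring `B` contains the integers, `I_{S̄',p'} ⊆ I_{S̄,p}` amounts to `p ∣ p'` together
with `x_{S̄} ≡ x_{S̄'} (mod p)` for all `x ∈ B`; as `B` is spanned by the mark vectors, the latter
is the congruence `m(S̄',T̄) ≡ m(S̄,T̄) (mod p)` for all `T̄`. Since `m(S̄,S̄) = [N_G(S̄) : S₀]`,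
the index conditions make `m(S̄',S̄)` and `m(S̄,S̄')` nonzero under this congruence, so each slice
is subconjugate to the other; in a finite group that forces them to be conjugate, hence equal as
representatives. What remains is arithmetic: `p ∣ p'` with `p, p'` zero or prime leaves only
`p' = p` or `p' = 0`.
-/

namespace Subgroup

variable [Group G]

theorem map_conj_inv_le_iff {g : G} {H K : Subgroup G} :
    H.map (MulAut.conj g⁻¹).toMonoidHom ≤ K ↔ ∀ k ∈ H, g⁻¹ * k * g ∈ K := by
  simp [SetLike.le_def]

theorem mem_normalizer_iff_forall_conj_mem [Finite G] {H : Subgroup G} {g : G} :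
    g ∈ normalizer (H : Set G) ↔ ∀ k ∈ H, g⁻¹ * k * g ∈ H := by
  rw [← inv_mem_iff, mem_normalizer_iff_map_conj_eq, ← map_conj_inv_le_iff]
  refine ⟨le_of_eq, fun hle => eq_of_le_of_card_ge hle ?_⟩
  exact (card_map_of_injective (MulAut.conj g⁻¹).injective).ge

theorem relIndex_eq_card_image_mk (H K : Subgroup G) :
    H.relIndex K = Nat.card ((QuotientGroup.mk : G → G ⧸ H) '' K) := by
  let f : K ⧸ H.subgroupOf K → G ⧸ H := Quotient.map' Subtype.val fun a b hab => by
    rw [QuotientGroup.leftRel_apply] at hab ⊢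
    exact hab
  have hf : Function.Injective f := by
    rintro ⟨a⟩ ⟨b⟩ hab
    exact QuotientGroup.eq.mpr (QuotientGroup.eq.mp hab :)
  have hrange : Set.range f = QuotientGroup.mk '' K := by
    ext x
    constructor
    · rintro ⟨⟨a⟩, rfl⟩
      exact ⟨a, a.2, rfl⟩
    · rintro ⟨a, ha, rfl⟩
      exact ⟨QuotientGroup.mk ⟨a, ha⟩, rfl⟩
  rw [← hrange, Nat.card_range_of_injective hf]
  rfl

theorem mul_inv_conj_mem_map_conj_iff (H : Subgroup G) (c g k : G) :
    (g * c⁻¹)⁻¹ * k * (g * c⁻¹) ∈ H.map (MulAut.conj c).toMonoidHom ↔ g⁻¹ * k * g ∈ H := by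
  rw [mem_map_equiv]
  simp [mul_assoc]

end Subgroup

namespace QuotientGroup

theorem leftRel_map_conj_iff [Group G] (H : Subgroup G) (c a b : G) :
    leftRel (H.map (MulAut.conj c).toMonoidHom) (a * c⁻¹) (b * c⁻¹) ↔ leftRel H a b := by
  rw [leftRel_apply, leftRel_apply, Subgroup.mem_map_equiv]
  simp [mul_assoc]

def quotientMapConjEquiv [Group G] (H : Subgroup G) (c : G) :
    G ⧸ H ≃ G ⧸ H.map (MulAut.conj c).toMonoidHom :=
  Quotient.congr (Equiv.mulRight c⁻¹) fun a b => (leftRel_map_conj_iff H c a b).symm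

end QuotientGroup

section Slices

variable [Group G] {n : ℕ}

theorem mark_sliceConj (c : G) (K T : Fin (n + 1) → Subgroup G) :
    mark K (sliceConj c T) = mark K T := by
  let e := QuotientGroup.quotientMapConjEquiv (T 0) c
  refine (Nat.card_congr (Equiv.subtypeEquiv e fun x => ?_)).symm
  induction x using QuotientGroup.induction_on with | H a => ?_
  refine Iff.trans ?_ (Equiv.mulRight c⁻¹).surjective.exists.symm
  refine exists_congr fun g => and_congr ?_ ?_
  · exact e.apply_eq_iff_eq.symm
  · simp only [Equiv.coe_mulRight, sliceConj, Subgroup.mul_inv_conj_mem_map_conj_iff]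

theorem sliceConj_one (T : Fin (n + 1) → Subgroup G) : sliceConj 1 T = T := by
  funext i
  ext x
  simp [sliceConj]

theorem card_sliceConj (g : G) (T : Fin (n + 1) → Subgroup G) (i : Fin (n + 1)) :
    Nat.card (sliceConj g T i) = Nat.card (T i) :=
  Subgroup.card_map_of_injective (MulAut.conj g).injective

theorem mem_sliceNormalizer_iff [Finite G] {S : Fin (n + 1) → Subgroup G} {g : G} :
    g ∈ sliceNormalizer S ↔ ∀ i, ∀ k ∈ S i, g⁻¹ * k * g ∈ S i := by
  simp only [sliceNormalizer, Subgroup.mem_iInf, Subgroup.mem_normalizer_iff_forall_conj_mem]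

theorem mark_self [Finite G] (S : Fin (n + 1) → Subgroup G) : mark S S = sliceIndex S := by
  rw [sliceIndex, Subgroup.relIndex_eq_card_image_mk]
  refine Nat.card_congr (Equiv.subtypeEquivRight fun x => ?_)
  simp only [Set.mem_image, SetLike.mem_coe, mem_sliceNormalizer_iff, and_comm]

theorem exists_sliceConj_le_of_mark_ne_zero {K S : Fin (n + 1) → Subgroup G}
    (h : mark K S ≠ 0) : ∃ g, ∀ i, sliceConj g K i ≤ S i := by
  obtain ⟨⟨_, g, -, hg⟩⟩ := (Nat.card_ne_zero.mp h).1
  exact ⟨g⁻¹, fun i => Subgroup.map_conj_inv_le_iff.mpr (hg i)⟩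

theorem exists_sliceConj_eq_of_mark_ne_zero [Finite G] {K S : Fin (n + 1) → Subgroup G}
    (h : mark K S ≠ 0) (h' : mark S K ≠ 0) : ∃ g, sliceConj g K = S := by
  obtain ⟨g, hg⟩ := exists_sliceConj_le_of_mark_ne_zero h
  obtain ⟨g', hg'⟩ := exists_sliceConj_le_of_mark_ne_zero h'
  refine ⟨g, funext fun i => Subgroup.eq_of_le_of_card_ge (hg i) ?_⟩
  calc Nat.card (S i) = Nat.card (sliceConj g' S i) := (card_sliceConj g' S i).symm
    _ ≤ Nat.card (K i) := Subgroup.card_le_of_le (hg' i)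
    _ = Nat.card (sliceConj g K i) := (card_sliceConj g K i).symm

end Slices

section Representatives

variable [Group G] {n : ℕ}

def IsSliceReps (R : Finset {S : Fin (n + 1) → Subgroup G // Monotone S}) : Prop :=
  ∀ S : {S : Fin (n + 1) → Subgroup G // Monotone S},
    ∃! T, T ∈ R ∧ ∃ g : G, sliceConj g S.1 = T.1

variable {R : Finset {S : Fin (n + 1) → Subgroup G // Monotone S}} (hR : IsSliceReps R)
include hR

theorem eq_of_sliceConj_eq {S S' : R} {g : G} (h : sliceConj g S'.1.1 = S.1.1) : S' = S := by
  obtain ⟨T, -, hT⟩ := hR S'.1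
  have hS : S.1 = T := hT S.1 ⟨S.2, g, h⟩
  have hS' : S'.1 = T := hT S'.1 ⟨S'.2, 1, sliceConj_one _⟩
  exact Subtype.ext (hS'.trans hS.symm)

theorem forall_mem_iff_forall_monotone {P : (Fin (n + 1) → Subgroup G) → Prop}
    (hP : ∀ g T, P (sliceConj g T) ↔ P T) : (∀ T : R, P T.1.1) ↔ ∀ T, Monotone T → P T := by
  refine ⟨fun h T hT => ?_, fun h T => h T.1.1 T.1.2⟩
  obtain ⟨T₀, ⟨hT₀, g, hg⟩, -⟩ := hR ⟨T, hT⟩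
  exact (hP g T).mp (hg ▸ h ⟨T₀, hT₀⟩)

theorem eq_of_mark_modEq [Finite G] {p : ℕ} {S S' : R}
    (hpS : ¬p ∣ sliceIndex S.1.1) (hpS' : ¬p ∣ sliceIndex S'.1.1)
    (h : mark S'.1.1 S.1.1 ≡ mark S.1.1 S.1.1 [MOD p])
    (h' : mark S'.1.1 S'.1.1 ≡ mark S.1.1 S'.1.1 [MOD p]) : S' = S := by
  have hne : mark S'.1.1 S.1.1 ≠ 0 := by
    intro h0
    rw [h0, Nat.ModEq.comm, Nat.modEq_zero_iff_dvd, mark_self] at h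
    exact hpS h
  have hne' : mark S.1.1 S'.1.1 ≠ 0 := by
    intro h0
    rw [h0, Nat.modEq_zero_iff_dvd, mark_self] at h'
    exact hpS' h'
  obtain ⟨g, hg⟩ := exists_sliceConj_eq_of_mark_ne_zero hne hne'
  exact eq_of_sliceConj_eq hR hg

end Representatives

theorem Subring.forall_dvd_imp_dvd_iff {ι : Type*} (B : Subring (ι → ℤ)) (i i' : ι) (a a' : ℤ) :
    (∀ x : B, a' ∣ (x : ι → ℤ) i' → a ∣ (x : ι → ℤ) i) ↔
      a ∣ a' ∧ ∀ x : B, a ∣ (x : ι → ℤ) i - (x : ι → ℤ) i' := by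
  constructor
  · intro h
    refine ⟨by simpa using h a' (by simp), fun x => ?_⟩
    simpa using h (x - ((x : ι → ℤ) i' : B)) (by simp)
  · rintro ⟨haa', hsub⟩ x hx
    simpa using dvd_add (hsub x) (haa'.trans hx)

theorem dvd_sub_of_mem_span {ι κ : Type*} {a : ℤ} {i i' : ι} {v : κ → ι → ℤ}
    (hv : ∀ j, a ∣ v j i - v j i') {x : ι → ℤ} (hx : x ∈ Submodule.span ℤ (Set.range v)) :
    a ∣ x i - x i' := by
  induction hx using Submodule.span_induction with
  | mem y hy => obtain ⟨j, rfl⟩ := hy; exact hv j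
  | zero => simp
  | add y z _ _ hy hz => simpa [add_sub_add_comm] using dvd_add hy hz
  | smul m y _ hy => simpa [← mul_sub] using dvd_mul_of_dvd_right hy m

theorem eq_or_eq_zero_and_prime_of_dvd {p p' : ℕ} (hp : p = 0 ∨ p.Prime)
    (hp' : p' = 0 ∨ p'.Prime) (h : p ∣ p') : p' = p ∨ (p' = 0 ∧ p.Prime) := by
  rcases hp' with rfl | hp'
  · rcases hp with rfl | hp
    · exact .inl rfl
    · exact .inr ⟨rfl, hp⟩
  · have hp0 : p ≠ 0 := by
      rintro rfl
      exact hp'.ne_zero (Nat.eq_zero_of_zero_dvd h)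
    exact .inl ((Nat.prime_dvd_prime_iff_eq (hp.resolve_left hp0) hp').mp h).symm

/-- inclusion of prime ideals `I_{S̄',p'} ⊆ I_{S̄,p}` of `B_n(G)`
holds iff either `p' = p` and `S̄' = S̄`, or `p' = 0`, `p` is prime, and
`m(S̄',T̄) ≡ m(S̄,T̄) (mod p)` for every `n`-slice `T̄`. -/
theorem prime_ideal_inclusion {n : ℕ} [Group G] [Finite G]
    (R : Finset {S : Fin (n + 1) → Subgroup G // Monotone S})
    (hR : ∀ S : {S : Fin (n + 1) → Subgroup G // Monotone S},
      ∃! T, T ∈ R ∧ ∃ g : G, sliceConj g S.1 = T.1)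
    (B : Subring (R → ℤ))
    (hBv : ∀ S : R, (fun T : R => (mark T.1.1 S.1.1 : ℤ)) ∈ B)
    (hBspan : ∀ x : B, (x : R → ℤ) ∈ Submodule.span ℤ
      (Set.range (fun S : R => fun T : R => (mark T.1.1 S.1.1 : ℤ))))
    (p p' : ℕ) (hp : p = 0 ∨ p.Prime) (hp' : p' = 0 ∨ p'.Prime)
    (S S' : R)
    (hpS : ¬(p ∣ sliceIndex S.1.1)) (hpS' : ¬(p' ∣ sliceIndex S'.1.1)) :
    (∀ x : B, (p' : ℤ) ∣ (x : R → ℤ) S' → (p : ℤ) ∣ (x : R → ℤ) S) ↔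
      ((p' = p ∧ S' = S) ∨
        (p' = 0 ∧ p.Prime ∧
          ∀ T : Fin (n + 1) → Subgroup G, Monotone T →
            mark S'.1.1 T ≡ mark S.1.1 T [MOD p])) := by
  have hmarks : (∀ x : B, (p : ℤ) ∣ (x : R → ℤ) S - (x : R → ℤ) S') ↔
      ∀ T, Monotone T → mark S'.1.1 T ≡ mark S.1.1 T [MOD p] := by
    rw [← forall_mem_iff_forall_monotone hR fun g T => by rw [mark_sliceConj, mark_sliceConj]]
    simp only [Nat.modEq_iff_dvd]
    exact ⟨fun h T => h ⟨_, hBv T⟩, fun h x => dvd_sub_of_mem_span h (hBspan x)⟩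
  rw [Subring.forall_dvd_imp_dvd_iff, hmarks, Int.natCast_dvd_natCast]
  constructor
  · rintro ⟨hpp', hcong⟩
    rcases eq_or_eq_zero_and_prime_of_dvd hp hp' hpp' with rfl | ⟨rfl, hp⟩
    · exact .inl ⟨rfl, eq_of_mark_modEq hR hpS hpS' (hcong _ S.1.2) (hcong _ S'.1.2)⟩
    · exact .inr ⟨rfl, hp, hcong⟩
  · rintro (⟨rfl, rfl⟩ | ⟨rfl, -, hcong⟩)
    · exact ⟨dvd_rfl, fun T _ => Nat.ModEq.refl _⟩
    · exact ⟨dvd_zero p, hcong⟩
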